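/- arXiv:2602.13925 — 8 statements merged into one kernel-verified Lean document; each statement's English description precedes it below -/
import Mathlib

section
/- With notation as above (y^q - y = u, z^q - z = v, η ∈ F_{q²} \ F_q, t = y + ηz), both z and y lie in the field K(u,v,t); in particular F := K(u,v,y,z) equals K(u,v,t). -/
theorem stmt1 (p n q : ℕ) [Fact p.Prime] (hn : 0 < n) (hq : q = p ^ n)
    (K F : Type) [Field K] [Field F] [Algebra K F] [IsAlgClosed K] [CharP K p]
    (u v y z t : F) (η : K)
    (hy : y ^ q - y = u) (hz : z ^ q - z = v)
    (hη1 : η ^ (q ^ 2) = η) (hη2 : η ^ q ≠ η)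
    (ht : t = y + algebraMap K F η * z) :
    z ∈ IntermediateField.adjoin K {u, v, t} ∧
    y ∈ IntermediateField.adjoin K {u, v, t} ∧
    IntermediateField.adjoin K {u, v, y, z} = IntermediateField.adjoin K {u, v, t} := by
  haveI hF : CharP F p := charP_of_injective_algebraMap (algebraMap K F).injective p
  haveI : ExpChar F p := ExpChar.prime (Fact.out)
  set c : F := algebraMap K F η with hcdef
  have hpow : (y + c * z) ^ q = y ^ q + c ^ q * z ^ q := by
    subst hq
    rw [add_pow_char_pow, mul_pow]
  have hcq : c ^ q = algebraMap K F (η ^ q) := by rw [map_pow]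
  have hcne : algebraMap K F (η ^ q - η) ≠ 0 := by
    intro h
    exact hη2 (sub_eq_zero.mp ((algebraMap K F).injective (by simpa using h)))
  have key : t ^ q - t = u + algebraMap K F (η ^ q) * v + algebraMap K F (η ^ q - η) * z := by
    rw [ht, map_sub, ← hcq, ← hcdef]
    linear_combination hpow + hy + c ^ q * hz
  have hzeq : z = (t ^ q - t - u - algebraMap K F (η ^ q) * v) *
      (algebraMap K F (η ^ q - η))⁻¹ := by
    rw [eq_mul_inv_iff_mul_eq₀ hcne]
    linear_combination -key
  set E := IntermediateField.adjoin K {u, v, t} with hE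
  have hu : u ∈ E := IntermediateField.subset_adjoin K _ (by simp)
  have hv : v ∈ E := IntermediateField.subset_adjoin K _ (by simp)
  have htE : t ∈ E := IntermediateField.subset_adjoin K _ (by simp)
  have hzE : z ∈ E := by
    rw [hzeq]
    exact mul_mem (sub_mem (sub_mem (sub_mem (pow_mem htE q) htE) hu)
      (mul_mem (IntermediateField.algebraMap_mem E _) hv))
      (inv_mem (IntermediateField.algebraMap_mem E _))
  have hyE : y ∈ E := by
    have : y = t - c * z := by rw [ht]; ring
    rw [this]
    exact sub_mem htE (mul_mem (IntermediateField.algebraMap_mem E _) hzE)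
  refine ⟨hzE, hyE, le_antisymm ?_ ?_⟩
  · rw [IntermediateField.adjoin_le_iff]
    rintro x (rfl | rfl | rfl | rfl) <;> first
      | exact hu | exact hv | exact hyE | exact hzE
  · rw [IntermediateField.adjoin_le_iff]
    have hu' : u ∈ IntermediateField.adjoin K {u, v, y, z} :=
      IntermediateField.subset_adjoin K _ (by simp)
    have hv' : v ∈ IntermediateField.adjoin K {u, v, y, z} :=
      IntermediateField.subset_adjoin K _ (by simp)
    have hy' : y ∈ IntermediateField.adjoin K {u, v, y, z} :=
      IntermediateField.subset_adjoin K _ (by simp)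
    have hz' : z ∈ IntermediateField.adjoin K {u, v, y, z} :=
      IntermediateField.subset_adjoin K _ (by simp)
    rintro x (rfl | rfl | rfl)
    · exact hu'
    · exact hv'
    · rw [ht]
      exact add_mem hy' (mul_mem (IntermediateField.algebraMap_mem _ _) hz')
end

section
/- Let q = 2^n and ε ∈ F_q with Tr_{F_q/F_2}(ε) = 1, and let ξ ∈ F_{q²} be a root of X² + X + ε. If y, z in an extension field satisfy y^q + y = u, z^q + z = v with u² + εv² + uv + 1 = 0, then setting s = y + ξz and t = y + (ξ+1)z one has (s^q + t)(t^q + s) = 1. -/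
/-!
Iterating Frobenius on ξ² = ξ + ε gives ξ^(2^i) = ξ + ε + ε² + ⋯ + ε^(2^(i-1)), so the trace
condition says exactly ξ^q = ξ + 1, and then also (ξ + 1)^q = ξ. Since x ↦ x^q is additive,
s^q + t = u + (ξ + 1)v and t^q + s = u + ξv, and the product of these two conjugates is the norm
form u² + uv + εv², which equals 1 by hypothesis.
-/

open Finset

theorem add_mul_pow_char_pow_add {R : Type*} [CommRing R] {p : ℕ} [Fact p.Prime] [CharP R p]
    {a b : R} (n : ℕ) (hab : a ^ p ^ n = b) (y z : R) :
    (y + a * z) ^ p ^ n + (y + b * z) = (y ^ p ^ n + y) + b * (z ^ p ^ n + z) := by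
  rw [add_pow_char_pow, mul_pow, hab]
  ring

section CharTwo

variable {R : Type*} [CommRing R] [CharP R 2] {ε ξ : R}

theorem pow_two_pow_eq_add_sum_of_sq_add_self_add_eq_zero (hξ : ξ ^ 2 + ξ + ε = 0) (i : ℕ) :
    ξ ^ 2 ^ i = ξ + ∑ j ∈ range i, ε ^ 2 ^ j := by
  have hξsq : ξ ^ 2 = ξ + ε := by
    linear_combination hξ - (ξ + ε) * CharTwo.two_eq_zero (R := R)
  induction i with
  | zero => simp
  | succ i ih =>
    rw [pow_succ, pow_mul, ih, CharTwo.add_sq, hξsq, CharTwo.sum_sq, sum_range_succ']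
    simp only [← pow_mul, ← pow_succ, pow_zero, pow_one]
    ring

theorem pow_two_pow_eq_add_one_of_sum_eq_one (hξ : ξ ^ 2 + ξ + ε = 0) {n : ℕ}
    (htr : ∑ i ∈ range n, ε ^ 2 ^ i = 1) : ξ ^ 2 ^ n = ξ + 1 := by
  rw [pow_two_pow_eq_add_sum_of_sq_add_self_add_eq_zero hξ, htr]

theorem add_one_pow_two_pow_of_pow_two_pow_eq_add_one {n : ℕ} (h : ξ ^ 2 ^ n = ξ + 1) :
    (ξ + 1) ^ 2 ^ n = ξ := by
  rw [add_pow_char_pow, h, one_pow, add_assoc, CharTwo.add_self_eq_zero, add_zero]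

theorem add_add_one_mul_mul_add_mul (hξ : ξ ^ 2 + ξ + ε = 0) (u v : R) :
    (u + (ξ + 1) * v) * (u + ξ * v) = u ^ 2 + ε * v ^ 2 + u * v := by
  linear_combination v ^ 2 * hξ + (ξ * u * v - ε * v ^ 2) * CharTwo.two_eq_zero (R := R)

end CharTwo

theorem stmt4_general (n q : ℕ) (hq : q = 2 ^ n)
    (K : Type) [Field K] [CharP K 2]
    (ε ξ u v y z s t : K)
    (htr : ∑ i ∈ Finset.range n, ε ^ (2 ^ i) = 1)
    (hξ : ξ ^ 2 + ξ + ε = 0)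
    (hy : y ^ q + y = u) (hz : z ^ q + z = v)
    (huv : u ^ 2 + ε * v ^ 2 + u * v + 1 = 0)
    (hs : s = y + ξ * z) (ht : t = y + (ξ + 1) * z) :
    (s ^ q + t) * (t ^ q + s) = 1 := by
  subst hq hs ht hy hz
  have hξq : ξ ^ 2 ^ n = ξ + 1 := pow_two_pow_eq_add_one_of_sum_eq_one hξ htr
  have hξ1q : (ξ + 1) ^ 2 ^ n = ξ := add_one_pow_two_pow_of_pow_two_pow_eq_add_one hξq
  rw [add_mul_pow_char_pow_add n hξq, add_mul_pow_char_pow_add n hξ1q,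
    add_add_one_mul_mul_add_mul hξ, ← CharTwo.neg_eq (1 : K)]
  exact eq_neg_of_add_eq_zero_left huv

theorem stmt4 (n q : ℕ) (hn : 0 < n) (hq : q = 2 ^ n)
    (K : Type) [Field K] [CharP K 2]
    (ε ξ u v y z s t : K)
    (hε : ε ^ q = ε) (htr : ∑ i ∈ Finset.range n, ε ^ (2 ^ i) = 1)
    (hξ : ξ ^ 2 + ξ + ε = 0) (hξ2 : ξ ^ (q ^ 2) = ξ)
    (hy : y ^ q + y = u) (hz : z ^ q + z = v)
    (huv : u ^ 2 + ε * v ^ 2 + u * v + 1 = 0)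
    (hs : s = y + ξ * z) (ht : t = y + (ξ + 1) * z) :
    (s ^ q + t) * (t ^ q + s) = 1 :=
  stmt4_general n q hq K ε ξ u v y z s t htr hξ hy hz huv hs ht
end

section
/- Let q = 2^n and let x be transcendental over F_q. Set u = 1/(x^q + x) and v = x^{q+1}/(x^q + x) in F_q(x). Then u^q·v + u·v^q + Tr_{F_q/F_2}(uv) + 1 = 0, where Tr_{F_q/F_2}(T) denotes the polynomial T + T² + ⋯ + T^{2^{n-1}} applied to uv. -/
/-!
Put `t = x^q + x` and `a = x / t`. In characteristic 2 one has `u v = x^{q+1} / t^2 = a + a^2`,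
so the trace of `u v` telescopes to `a^q + a`. Since `q` is a power of the characteristic,
`t^q = x^{q^2} + x^q`, and after clearing the denominators `t` and `t^q` the claimed relation
becomes an identity in `x`, `x^q` and `x^{q^2}` that holds modulo 2.
-/

open Finset

theorem sum_range_pow_two_pow_add_sq {R : Type*} [CommRing R] [CharP R 2] (a : R) (n : ℕ) :
    ∑ i ∈ range n, (a + a ^ 2) ^ 2 ^ i = a ^ 2 ^ n + a := by
  induction n with
  | zero => simp [CharTwo.add_self_eq_zero]
  | succ n ih =>
    rw [sum_range_succ, ih, add_pow_char_pow, ← pow_mul, ← pow_succ']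
    linear_combination (a ^ 2 ^ n) * CharTwo.two_eq_zero (R := R)

theorem trace_relation_of_pow_two_pow_add_ne_zero {F : Type*} [Field F] [CharP F 2]
    (n q : ℕ) (hq : q = 2 ^ n) (x u v : F) (ht : x ^ q + x ≠ 0)
    (hu : u = 1 / (x ^ q + x)) (hv : v = x ^ (q + 1) / (x ^ q + x)) :
    u ^ q * v + u * v ^ q + (∑ i ∈ range n, (u * v) ^ 2 ^ i) + 1 = 0 := by
  subst hq hu hv
  have h2 := CharTwo.two_eq_zero (R := F)
  have huv : 1 / (x ^ 2 ^ n + x) * (x ^ (2 ^ n + 1) / (x ^ 2 ^ n + x)) =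
      x / (x ^ 2 ^ n + x) + (x / (x ^ 2 ^ n + x)) ^ 2 := by
    field_simp
    linear_combination (-x ^ 2) * h2
  have htq : (x ^ 2 ^ n + x) ^ 2 ^ n = (x ^ 2 ^ n) ^ 2 ^ n + x ^ 2 ^ n := add_pow_char_pow ..
  have htq_ne : (x ^ 2 ^ n) ^ 2 ^ n + x ^ 2 ^ n ≠ 0 := htq ▸ pow_ne_zero _ ht
  rw [huv, sum_range_pow_two_pow_add_sq, pow_succ]
  simp only [div_pow, mul_pow, one_pow, htq]
  generalize x ^ 2 ^ n = y at *
  generalize y ^ 2 ^ n = z at *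
  field_simp
  linear_combination (2 * y * x + y * z + y ^ 2 + x * z) * h2

theorem RatFunc.X_pow_two_pow_add_X_ne_zero {K : Type*} [Field K] [CharP K 2] {n : ℕ}
    (hn : n ≠ 0) : (RatFunc.X : RatFunc K) ^ 2 ^ n + RatFunc.X ≠ 0 := by
  rw [← CharTwo.sub_eq_add, ← RatFunc.algebraMap_X, ← map_pow, ← map_sub]
  exact RatFunc.algebraMap_ne_zero (FiniteField.X_pow_card_pow_sub_X_ne_zero K hn one_lt_two)

theorem stmt8 (n q : ℕ) (hn : 0 < n) (hq : q = 2 ^ n)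
    (u v : RatFunc (GaloisField 2 n))
    (hu : u = 1 / (RatFunc.X ^ q + RatFunc.X))
    (hv : v = RatFunc.X ^ (q + 1) / (RatFunc.X ^ q + RatFunc.X)) :
    u ^ q * v + u * v ^ q + (∑ i ∈ Finset.range n, (u * v) ^ (2 ^ i)) + 1 = 0 :=
  trace_relation_of_pow_two_pow_add_ne_zero n q hq _ u v
    (hq ▸ RatFunc.X_pow_two_pow_add_X_ne_zero hn.ne') hu hv
end

section
/- Let q = 2^n, x transcendental over F_q, u = 1/(x^q + x), v = x^{q+1}/(x^q + x). Then x satisfies x = x^q + 1/u and x² = (x + v)/u, and consequently F_q(u, v) = F_q(x). -/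
lemma aux_algebraMap_eq_aeval (F : Type*) [Field F] (p : Polynomial F) :
    algebraMap (Polynomial F) (RatFunc F) p = Polynomial.aeval RatFunc.X p := by
  have h := Polynomial.algHom_ext (R := F) (B := RatFunc F)
    (f := IsScalarTower.toAlgHom F (Polynomial F) (RatFunc F))
    (g := Polynomial.aeval RatFunc.X) (by simp [RatFunc.algebraMap_X])
  exact DFunLike.congr_fun h p

lemma aux_adjoinX_top (F : Type*) [Field F] (K : IntermediateField F (RatFunc F))
    (hX : RatFunc.X ∈ K) : K = ⊤ := by
  rw [eq_top_iff]
  rintro f -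
  have hadj : Algebra.adjoin F {(RatFunc.X : RatFunc F)} ≤ K.toSubalgebra :=
    Algebra.adjoin_le (by simpa using hX)
  have hp : ∀ p : Polynomial F, algebraMap (Polynomial F) (RatFunc F) p ∈ K := by
    intro p
    rw [aux_algebraMap_eq_aeval]
    exact hadj (Polynomial.aeval_mem_adjoin_singleton F _)
  rw [← RatFunc.num_div_denom f]
  exact div_mem (hp _) (hp _)

theorem stmt9 (n q : ℕ) (hn : 0 < n) (hq : q = 2 ^ n)
    (u v : RatFunc (GaloisField 2 n))
    (hu : u = 1 / (RatFunc.X ^ q + RatFunc.X))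
    (hv : v = RatFunc.X ^ (q + 1) / (RatFunc.X ^ q + RatFunc.X)) :
    RatFunc.X = RatFunc.X ^ q + 1 / u ∧
    RatFunc.X ^ 2 = (RatFunc.X + v) / u ∧
    IntermediateField.adjoin (GaloisField 2 n) {u, v} = ⊤ := by
  haveI : CharP (RatFunc (GaloisField 2 n)) 2 :=
    charP_of_injective_algebraMap (algebraMap (GaloisField 2 n) _).injective 2
  set X : RatFunc (GaloisField 2 n) := RatFunc.X with hX
  have h2 : 2 ≤ q := by
    subst hq; calc 2 = 2^1 := rfl
    _ ≤ 2^n := Nat.pow_le_pow_right (by norm_num) hn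
  have two0 : (2 : RatFunc (GaloisField 2 n)) = 0 := by
    exact_mod_cast CharP.cast_eq_zero (RatFunc (GaloisField 2 n)) 2
  have ht : X ^ q + X ≠ 0 := by
    have hP : (Polynomial.X ^ q + Polynomial.X : Polynomial (GaloisField 2 n)) ≠ 0 := by
      intro h
      have h1 := congrArg (fun p => Polynomial.coeff p 1) h
      simp only [Polynomial.coeff_add, Polynomial.coeff_X_pow, Polynomial.coeff_X_one,
        Polynomial.coeff_zero] at h1
      rw [if_neg (by omega : ¬ 1 = q)] at h1
      simp at h1
    have he : X ^ q + X
        = algebraMap (Polynomial (GaloisField 2 n)) _ (Polynomial.X ^ q + Polynomial.X) := by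
      simp [hX, RatFunc.algebraMap_X]
    rw [he]
    exact RatFunc.algebraMap_ne_zero hP
  have hu0 : u ≠ 0 := by
    rw [hu, one_div]; exact inv_ne_zero ht
  have h1u : 1 / u = X ^ q + X := by rw [hu, one_div_one_div]
  have c1 : X = X ^ q + 1 / u := by
    rw [h1u, ← add_assoc, CharTwo.add_self_eq_zero, zero_add]
  have c2 : X ^ 2 = (X + v) / u := by
    rw [hv, hu]
    field_simp
    ring_nf
    linear_combination (-(X * X ^ q)) * two0
  refine ⟨c1, c2, ?_⟩
  set K := IntermediateField.adjoin (GaloisField 2 n) {u, v} with hK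
  have huK : u ∈ K := IntermediateField.subset_adjoin _ _ (Set.mem_insert _ _)
  have hvK : v ∈ K := IntermediateField.subset_adjoin _ _ (by simp)
  have hsq : X ^ 2 = (X + v) * u⁻¹ := by rw [c2, div_eq_mul_inv]
  have key : ∀ k : ℕ, ∃ b ∈ K, X ^ (2 ^ k) = X * (u⁻¹) ^ (2 ^ k - 1) + b := by
    intro k
    induction k with
    | zero => exact ⟨0, zero_mem K, by simp⟩
    | succ k ih =>
      obtain ⟨b, hbK, hb⟩ := ih
      refine ⟨v * u⁻¹ * ((u⁻¹) ^ (2 ^ k - 1)) ^ 2 + b ^ 2,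
        add_mem (mul_mem (mul_mem hvK (K.inv_mem huK)) (pow_mem (pow_mem (K.inv_mem huK) _) 2))
          (pow_mem hbK 2), ?_⟩
      have e1 : (2:ℕ) ^ (k+1) = 2 ^ k * 2 := by ring
      have e2 : (2:ℕ) ^ k * 2 - 1 = (2 ^ k - 1) * 2 + 1 := by
        have := Nat.one_le_two_pow (n := k); omega
      rw [e1, pow_mul, hb, CharTwo.add_sq, mul_pow, hsq, e2]
      ring
  obtain ⟨b, hbK, hb⟩ := key n
  rw [← hq] at hb
  have hinv : u⁻¹ = X ^ q + X := (one_div u).symm.trans h1u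
  have hfr : X ^ q = X + u⁻¹ := by
    rw [hinv]; linear_combination (-X) * two0
  -- solve for X
  have hdenom : (1 : RatFunc (GaloisField 2 n)) + (u⁻¹) ^ (q - 1) ≠ 0 := by
    intro h
    have h1 : (u⁻¹) ^ (q - 1) = 1 := by
      have := CharTwo.neg_eq (R := RatFunc (GaloisField 2 n))
      have : (u⁻¹) ^ (q-1) = -1 := by linear_combination h
      rw [this, CharTwo.neg_eq]
    rw [hinv] at h1
    -- (X^q + X)^(q-1) = 1 impossible, by degrees in the polynomial ring
    have he : ((X ^ q + X) ^ (q-1) : RatFunc (GaloisField 2 n))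
        = algebraMap (Polynomial (GaloisField 2 n)) _
          ((Polynomial.X ^ q + Polynomial.X) ^ (q-1)) := by
      simp [hX, RatFunc.algebraMap_X]
    rw [he, show (1 : RatFunc (GaloisField 2 n))
        = algebraMap (Polynomial (GaloisField 2 n)) _ 1 by simp] at h1
    have hpe := RatFunc.algebraMap_injective (K := GaloisField 2 n) h1
    have hlt : (Polynomial.X : Polynomial (GaloisField 2 n)).degree
        < ((Polynomial.X : Polynomial (GaloisField 2 n)) ^ q).degree := by
      rw [Polynomial.degree_X, Polynomial.degree_X_pow]
      exact_mod_cast (by omega : 1 < q)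
    have hdegp : (Polynomial.X ^ q + Polynomial.X : Polynomial (GaloisField 2 n)).degree = q := by
      rw [Polynomial.degree_add_eq_left_of_degree_lt hlt, Polynomial.degree_X_pow]
    have hnd : (Polynomial.X ^ q + Polynomial.X : Polynomial (GaloisField 2 n)).natDegree = q :=
      Polynomial.natDegree_eq_of_degree_eq_some hdegp
    have hd := congrArg Polynomial.natDegree hpe
    rw [Polynomial.natDegree_pow, Polynomial.natDegree_one, hnd] at hd
    have := Nat.mul_pos (by omega : 0 < q - 1) (by omega : 0 < q)
    omega
  have hXeq : X * ((1 : RatFunc (GaloisField 2 n)) + (u⁻¹) ^ (q - 1)) = u⁻¹ + b := by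
    have := hb
    rw [hfr] at this
    linear_combination this + (X * (u⁻¹)^(q-1) - u⁻¹) * two0
  have hXmem : X ∈ K := by
    have : X = (u⁻¹ + b) / (1 + (u⁻¹) ^ (q - 1)) := (eq_div_iff hdenom).mpr hXeq
    rw [this]
    exact div_mem (add_mem (K.inv_mem huK) hbK)
      (add_mem (one_mem K) (pow_mem (K.inv_mem huK) _))
  exact aux_adjoinX_top _ K hXmem
end

section
/- Let q = 2^n, and let x, y, z satisfy y^q + y = 1/(x^q + x) and z^q + z = x^{q+1}/(x^q + x) over F_q. For μ ∈ F_q and ν ∈ F_{q²} with ν^q + ν = μ, the elements x' = x + μ, y' = y, z' = z + μ²y + ν satisfy the same equations: y'^q + y' = 1/(x'^q + x') and z'^q + z' = x'^{q+1}/(x'^q + x'). -/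
theorem stmt15 (n q : ℕ) (hn : 0 < n) (hq : q = 2 ^ n)
    (L : Type) [Field L] [CharP L 2]
    (x y z mu nu : L) (hmu : mu ^ q = mu)
    (hnu : nu ^ q + nu = mu) (hnu2 : nu ^ (q ^ 2) = nu)
    (hx : x ^ q + x ≠ 0)
    (hy : y ^ q + y = 1 / (x ^ q + x))
    (hz : z ^ q + z = x ^ (q + 1) / (x ^ q + x)) :
    y ^ q + y = 1 / ((x + mu) ^ q + (x + mu)) ∧
    (z + mu ^ 2 * y + nu) ^ q + (z + mu ^ 2 * y + nu) =
      (x + mu) ^ (q + 1) / ((x + mu) ^ q + (x + mu)) := by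
  subst hq
  have fq : ∀ a b : L, (a + b) ^ (2 ^ n) = a ^ (2 ^ n) + b ^ (2 ^ n) :=
    fun a b => add_pow_char_pow ..
  have hm2 : (mu ^ 2) ^ (2 ^ n) = mu ^ 2 := by
    rw [← pow_mul, mul_comm, pow_mul, hmu]
  have h1 : (x + mu) ^ (2 ^ n) + (x + mu) = x ^ (2 ^ n) + x := by
    rw [fq, hmu]
    linear_combination CharTwo.add_self_eq_zero mu
  constructor
  · rw [h1]; exact hy
  · have key : (z + mu ^ 2 * y + nu) ^ (2 ^ n) + (z + mu ^ 2 * y + nu) =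
        (z ^ (2 ^ n) + z) + mu ^ 2 * (y ^ (2 ^ n) + y) + (nu ^ (2 ^ n) + nu) := by
      rw [fq, fq, mul_pow, hm2]; ring
    have h3 : (x + mu) ^ (2 ^ n + 1) = (x ^ (2 ^ n) + mu) * (x + mu) := by
      rw [pow_succ, fq, hmu]
    rw [h1, key, hz, hy, hnu, h3, pow_succ]
    field_simp
    ring
end

section
/- Let q = p^n with p an odd prime, and let x, y, z, t satisfy y^q - y = 1/(x^q - x), z^q - z = x^{q+1}/(x^q - x), t^q - t = (x^q + x)/(x^q - x). Then for μ ∈ F_q, the substitution x' = x + μ, y' = y, z' = z + μ²y + μt, t' = t + 2μy satisfies the same three equations. -/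
theorem stmt16 (p n q : ℕ) [Fact p.Prime] (hp : p ≠ 2) (hn : 0 < n) (hq : q = p ^ n)
    (L : Type) [Field L] [CharP L p]
    (x y z t mu : L) (hmu : mu ^ q = mu)
    (hx : x ^ q - x ≠ 0)
    (hy : y ^ q - y = 1 / (x ^ q - x))
    (hz : z ^ q - z = x ^ (q + 1) / (x ^ q - x))
    (ht : t ^ q - t = (x ^ q + x) / (x ^ q - x)) :
    y ^ q - y = 1 / ((x + mu) ^ q - (x + mu)) ∧
    (z + mu ^ 2 * y + mu * t) ^ q - (z + mu ^ 2 * y + mu * t) =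
      (x + mu) ^ (q + 1) / ((x + mu) ^ q - (x + mu)) ∧
    (t + 2 * mu * y) ^ q - (t + 2 * mu * y) =
      ((x + mu) ^ q + (x + mu)) / ((x + mu) ^ q - (x + mu)) := by
  have hadd : ∀ a b : L, (a + b) ^ q = a ^ q + b ^ q := by
    intro a b; subst hq; exact add_pow_char_pow a b p n
  have h2 : (2 : L) ^ q = 2 := by
    have := hadd 1 1; norm_num at this; simpa using this
  have hmu2 : (mu ^ 2) ^ q = mu ^ 2 := by
    rw [← pow_mul, mul_comm, pow_mul, hmu]
  have hxm : (x + mu) ^ q = x ^ q + mu := by rw [hadd, hmu]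
  have hd : (x + mu) ^ q - (x + mu) = x ^ q - x := by rw [hxm]; ring
  refine ⟨by rw [hd, hy], ?_, ?_⟩
  · have lhs : (z + mu ^ 2 * y + mu * t) ^ q - (z + mu ^ 2 * y + mu * t)
        = (z ^ q - z) + mu ^ 2 * (y ^ q - y) + mu * (t ^ q - t) := by
      rw [hadd, hadd, mul_pow, mul_pow, hmu2, hmu]; ring
    rw [lhs, hd, hy, hz, ht, show (x + mu) ^ (q + 1) = (x ^ q + mu) * (x + mu) from by rw [pow_succ, hxm], pow_succ]
    field_simp
    ring
  · have lhs : (t + 2 * mu * y) ^ q - (t + 2 * mu * y)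
        = (t ^ q - t) + 2 * mu * (y ^ q - y) := by
      rw [hadd, mul_pow, mul_pow, hmu, h2]; ring
    rw [lhs, hd, hy, ht, hxm]
    field_simp
    ring
end

section
/- Let q = p^n with p an odd prime, and let x, y, z, t satisfy y^q - y = 1/(x^q - x), z^q - z = x^{q+1}/(x^q - x), t^q - t = (x^q + x)/(x^q - x). Then the substitution x' = -1/x, y' = z, z' = y, t' = -t satisfies the same three equations. -/
section OddPower

variable {K : Type*} [Field K] {q : ℕ}

lemma neg_one_div_pow_of_odd (hq : Odd q) (x : K) : (-1 / x) ^ q = -1 / x ^ q := by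
  rw [div_pow, hq.neg_one_pow]

lemma neg_one_div_pow_succ_of_odd (hq : Odd q) (x : K) : (-1 / x) ^ (q + 1) = 1 / x ^ (q + 1) := by
  rw [div_pow, hq.add_one.neg_one_pow]

lemma neg_one_div_pow_sub_of_odd (hq : Odd q) {x : K} (hx : x ≠ 0) :
    (-1 / x) ^ q - (-1 / x) = (x ^ q - x) / x ^ (q + 1) := by
  rw [neg_one_div_pow_of_odd hq]
  field_simp
  ring

lemma neg_one_div_pow_add_of_odd (hq : Odd q) {x : K} (hx : x ≠ 0) :
    (-1 / x) ^ q + (-1 / x) = -((x ^ q + x) / x ^ (q + 1)) := by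
  rw [neg_one_div_pow_of_odd hq]
  field_simp
  ring

end OddPower

theorem stmt17_general (p n q : ℕ) [Fact p.Prime] (hp : p ≠ 2) (hq : q = p ^ n)
    (L : Type) [Field L]
    (x y z t : L) (hx : x ^ q - x ≠ 0)
    (hy : y ^ q - y = 1 / (x ^ q - x))
    (hz : z ^ q - z = x ^ (q + 1) / (x ^ q - x))
    (ht : t ^ q - t = (x ^ q + x) / (x ^ q - x)) :
    z ^ q - z = 1 / ((-1 / x) ^ q - (-1 / x)) ∧
    y ^ q - y = (-1 / x) ^ (q + 1) / ((-1 / x) ^ q - (-1 / x)) ∧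
    (-t) ^ q - (-t) = ((-1 / x) ^ q + (-1 / x)) / ((-1 / x) ^ q - (-1 / x)) := by
  have hodd : Odd q := hq ▸ ((Fact.out : p.Prime).odd_of_ne_two hp).pow
  have hx0 : x ≠ 0 := by
    rintro rfl
    exact hx (by simp [hodd.pos.ne'])
  have hxq : x ^ (q + 1) ≠ 0 := pow_ne_zero _ hx0
  rw [neg_one_div_pow_sub_of_odd hodd hx0]
  refine ⟨?_, ?_, ?_⟩
  · rw [hz, one_div_div]
  · rw [hy, neg_one_div_pow_succ_of_odd hodd, div_div_div_cancel_right₀ hxq]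
  · rw [hodd.neg_pow, neg_one_div_pow_add_of_odd hodd hx0, neg_div, div_div_div_cancel_right₀ hxq,
      ← ht]
    ring

theorem stmt17 (p n q : ℕ) [Fact p.Prime] (hp : p ≠ 2) (hn : 0 < n) (hq : q = p ^ n)
    (L : Type) [Field L] [CharP L p]
    (x y z t : L) (hx0 : x ≠ 0) (hx : x ^ q - x ≠ 0)
    (hy : y ^ q - y = 1 / (x ^ q - x))
    (hz : z ^ q - z = x ^ (q + 1) / (x ^ q - x))
    (ht : t ^ q - t = (x ^ q + x) / (x ^ q - x)) :
    z ^ q - z = 1 / ((-1 / x) ^ q - (-1 / x)) ∧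
    y ^ q - y = (-1 / x) ^ (q + 1) / ((-1 / x) ^ q - (-1 / x)) ∧
    (-t) ^ q - (-t) = ((-1 / x) ^ q + (-1 / x)) / ((-1 / x) ^ q - (-1 / x)) :=
  stmt17_general p n q hp hq L x y z t hx hy hz ht
end

section
/- Let q be an odd prime power with q ≡ 1 mod 4, and let α₁, …, α_{(q-1)/4} ∈ F_{q²} be chosen so that the union of {α_i, -α_i, 1/α_i, -1/α_i} over i is exactly the set of roots of T^{q+1} + 1 that are not roots of T² + 1. Then in F_q[w] (with w = uv a formal variable), one has the polynomial identity: the polynomial U^q V + U V^q, rewritten after substituting the relation, satisfies u^q v + u v^q = (2uv + 1)·∏_{i=1}^{(q-1)/4}(1 + 4uv - (α_i + α_i^q)²(uv)²), where u = 1/(x^q - x) and v = x^{q+1}/(x^q - x) in F_q(x). -/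
/-!
Over `K = 𝔽_{q²}` the polynomial `T^{q+1} + 1` divides `T^{q²} - T`, so it has `q + 1` distinct
roots in `K`. Those with `β² = -1` are `±i`; the others lie in the classes `{α, -α, α⁻¹, -α⁻¹}`,
which have `q - 1` members counted with multiplicity, so the multiset of roots is exactly `±i`
together with the classes. With `y = X^q`, `z = X` one has
`u^q v + u v^q = (yz + (yz)^q) / (y - z)^{q+1}`, and since `y = X^{q-1} z` this numerator is
`∏_β (y - β z)` over the roots. Grouping the factors, `±i` contribute `(y - z)² (2uv + 1)` and each
class contributes `(y - z)⁴ (1 + 4uv - (α - α⁻¹)² (uv)²)`, where `α + α^q = α - α⁻¹` because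
`α^{q+1} = -1`.
-/

open Polynomial

namespace FiniteField

variable {K : Type*} [Field K] [Fintype K]

theorem splits_X_pow_card_sub_X_self : (X ^ Fintype.card K - X : K[X]).Splits := by
  rw [splits_iff_card_roots, roots_X_pow_card_sub_X,
    X_pow_card_sub_X_natDegree_eq K Fintype.one_lt_card]
  rfl

theorem X_pow_add_one_dvd_X_pow_card_sub_X {m : ℕ} (h : 2 * m ∣ Fintype.card K - 1) :
    (X ^ m + 1 : K[X]) ∣ X ^ Fintype.card K - X := by
  obtain ⟨k, hk⟩ := h
  have hcard : Fintype.card K = 2 * m * k + 1 := by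
    have := Fintype.card_pos (α := K)
    omega
  calc (X ^ m + 1 : K[X]) ∣ (X ^ m) ^ 2 - 1 := ⟨X ^ m - 1, by ring⟩
    _ ∣ ((X ^ m) ^ 2) ^ k - 1 := by simpa using sub_dvd_pow_sub_pow ((X ^ m : K[X]) ^ 2) 1 k
    _ ∣ X ^ Fintype.card K - X := ⟨X, by rw [hcard]; ring⟩

theorem splits_X_pow_add_one {m : ℕ} (h : 2 * m ∣ Fintype.card K - 1) :
    (X ^ m + 1 : K[X]).Splits :=
  splits_X_pow_card_sub_X_self.of_dvd (X_pow_card_sub_X_ne_zero K Fintype.one_lt_card)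
    (X_pow_add_one_dvd_X_pow_card_sub_X h)

theorem nodup_roots_X_pow_add_one {m : ℕ} (h : 2 * m ∣ Fintype.card K - 1) :
    (X ^ m + 1 : K[X]).roots.Nodup := by
  refine Multiset.nodup_of_le (roots.le_of_dvd (X_pow_card_sub_X_ne_zero K Fintype.one_lt_card)
    (X_pow_add_one_dvd_X_pow_card_sub_X h)) ?_
  rw [roots_X_pow_card_sub_X]
  exact Finset.univ.nodup

end FiniteField

theorem Polynomial.Splits.prod_roots_map_mul_sub_algebraMap_mul {K L : Type*} [Field K]
    [CommRing L] [Algebra K L] {f : K[X]} (hf : f.Splits) (hm : f.Monic) (t z : L) :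
    (f.roots.map fun β => t * z - algebraMap K L β * z).prod = z ^ f.natDegree * aeval t f := by
  simp_rw [← sub_mul]
  rw [Multiset.prod_map_mul, Multiset.map_const', Multiset.prod_replicate, mul_comm,
    ← hf.natDegree_eq_card_roots]
  congr 1
  conv_rhs => rw [hf.eq_prod_roots_of_monic hm]
  simp [map_multiset_prod, Multiset.map_map]

theorem roots_X_pow_add_one_eq {K ι : Type*} [Field K] [Fintype ι] {m : ℕ} {i : K}
    (hi : i ^ 2 = -1) (hm : m = 4 * Fintype.card ι + 2) (hsplits : (X ^ m + 1 : K[X]).Splits)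
    (hnodup : (X ^ m + 1 : K[X]).roots.Nodup) (α : ι → K)
    (hα : (⋃ j, ({α j, -α j, (α j)⁻¹, -(α j)⁻¹} : Set K)) =
      {β : K | β ^ m + 1 = 0 ∧ β ^ 2 + 1 ≠ 0}) :
    (X ^ m + 1 : K[X]).roots =
      i ::ₘ -i ::ₘ Finset.univ.val.bind fun j => {α j, -α j, (α j)⁻¹, -(α j)⁻¹} := by
  have hdeg : (X ^ m + 1 : K[X]).natDegree = m := by rw [← C_1, natDegree_X_pow_add_C]
  have hne : (X ^ m + 1 : K[X]) ≠ 0 := ne_zero_of_natDegree_gt (n := 0) (by omega)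
  refine Multiset.eq_of_le_of_card_le ((Multiset.le_iff_subset hnodup).2 fun β hβ => ?_) ?_
  · have hβ : β ^ m + 1 = 0 := by simpa [mem_roots hne] using hβ
    by_cases hβi : β ^ 2 + 1 = 0
    · have : (β - i) * (β + i) = 0 := by linear_combination hβi - hi
      rcases mul_eq_zero.1 this with h | h
      · simp [sub_eq_zero.1 h]
      · simp [eq_neg_of_add_eq_zero_left h]
    · obtain ⟨j, hj⟩ := Set.mem_iUnion.1
        (hα ▸ ⟨hβ, hβi⟩ : β ∈ ⋃ j, ({α j, -α j, (α j)⁻¹, -(α j)⁻¹} : Set K))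
      refine Multiset.mem_cons_of_mem (Multiset.mem_cons_of_mem
        (Multiset.mem_bind.2 ⟨j, Finset.mem_univ_val j, ?_⟩))
      simpa using hj
  · rw [← hsplits.natDegree_eq_card_roots, hdeg, hm]
    simp
    omega

section FieldIdentities

variable {L : Type*} [Field L] {y z : L}

theorem one_div_sub_pow_mul_add_mul_pow (hyz : y ≠ z) (n : ℕ) :
    (1 / (y - z)) ^ n * (y * z / (y - z)) + 1 / (y - z) * (y * z / (y - z)) ^ n =
      (y * z + (y * z) ^ n) / (y - z) ^ (n + 1) := by
  have : y - z ≠ 0 := sub_ne_zero.2 hyz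
  rw [div_pow, div_pow]
  field_simp
  ring

theorem sub_mul_sub_neg_mul_eq_of_sq_eq_neg_one {i : L} (hyz : y ≠ z) (hi : i ^ 2 = -1) :
    (y - i * z) * (y - -i * z) = (y - z) ^ 2 * (2 * (y * z / (y - z) ^ 2) + 1) := by
  have : y - z ≠ 0 := sub_ne_zero.2 hyz
  field_simp
  linear_combination (-z ^ 2) * hi

theorem sub_mul_sub_neg_mul_sub_inv_mul_sub_neg_inv_mul_eq {a : L} (ha : a ≠ 0) (hyz : y ≠ z) :
    (y - a * z) * (y - -a * z) * (y - a⁻¹ * z) * (y - -a⁻¹ * z) =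
      (y - z) ^ 4 *
        (1 + 4 * (y * z / (y - z) ^ 2) - (a - a⁻¹) ^ 2 * (y * z / (y - z) ^ 2) ^ 2) := by
  have : y - z ≠ 0 := sub_ne_zero.2 hyz
  field_simp
  ring

theorem prod_map_sub_mul_eq_of_pow_succ_add_one_eq_zero {K : Type*} [Field K] (f : K →+* L)
    {a : K} {q : ℕ} (h : a ^ (q + 1) + 1 = 0) (hyz : y ≠ z) :
    (({a, -a, a⁻¹, -a⁻¹} : Multiset K).map fun β => y - f β * z).prod =
      (y - z) ^ 4 *
        (1 + 4 * (y * z / (y - z) ^ 2) - f ((a + a ^ q) ^ 2) * (y * z / (y - z) ^ 2) ^ 2) := by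
  have ha : a ≠ 0 := by
    rintro rfl
    simp at h
  have hpow : a ^ q = -a⁻¹ := by
    field_simp
    linear_combination h
  rw [hpow, ← sub_eq_add_neg, map_pow, map_sub, map_inv₀,
    ← sub_mul_sub_neg_mul_sub_inv_mul_sub_neg_inv_mul_eq ((map_ne_zero f).2 ha) hyz]
  simp [mul_assoc]

theorem prod_map_sub_mul_div_sub_pow_eq {K ι : Type*} [Field K] [Fintype ι] (f : K →+* L)
    {q : ℕ} (hq : q + 1 = 4 * Fintype.card ι + 2) {i : K} (hi : i ^ 2 = -1) (α : ι → K)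
    (hα : ∀ j, α j ^ (q + 1) + 1 = 0) (hyz : y ≠ z) :
    ((i ::ₘ -i ::ₘ Finset.univ.val.bind fun j => {α j, -α j, (α j)⁻¹, -(α j)⁻¹}).map
        fun β => y - f β * z).prod / (y - z) ^ (q + 1) =
      (2 * (y * z / (y - z) ^ 2) + 1) *
        ∏ j, (1 + 4 * (y * z / (y - z) ^ 2) - f ((α j + α j ^ q) ^ 2) * (y * z / (y - z) ^ 2) ^ 2) := by
  have hfi : (y - f i * z) * (y - f (-i) * z) = (y - z) ^ 2 * (2 * (y * z / (y - z) ^ 2) + 1) := by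
    rw [map_neg]
    exact sub_mul_sub_neg_mul_eq_of_sq_eq_neg_one hyz (by rw [← map_pow, hi, map_neg, map_one])
  have hden : (y - z) ^ (q + 1) = (y - z) ^ 2 * ((y - z) ^ 4) ^ Fintype.card ι := by
    rw [← pow_mul, ← pow_add, hq, add_comm, mul_comm]
  have : y - z ≠ 0 := sub_ne_zero.2 hyz
  simp only [Multiset.map_cons, Multiset.prod_cons, Multiset.map_bind, Multiset.prod_bind]
  rw [← mul_assoc, hfi, ← Finset.prod_eq_multiset_prod, Finset.prod_congr rfl fun j _ =>
    prod_map_sub_mul_eq_of_pow_succ_add_one_eq_zero f (hα j) hyz,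
    Finset.prod_mul_distrib, Finset.prod_const, Finset.card_univ, hden]
  field_simp

end FieldIdentities

theorem prod_roots_X_pow_succ_add_one_map_pow_sub_algebraMap_mul {K L : Type*} [Field K]
    [CommRing L] [Algebra K L] {q : ℕ} (hq : q ≠ 0) (hsplits : (X ^ (q + 1) + 1 : K[X]).Splits)
    (z : L) :
    ((X ^ (q + 1) + 1 : K[X]).roots.map fun β => z ^ q - algebraMap K L β * z).prod =
      z ^ q * z + (z ^ q * z) ^ q := by
  have h := hsplits.prod_roots_map_mul_sub_algebraMap_mul
    (by simpa using monic_X_pow_add_C (1 : K) q.succ_ne_zero) (z ^ (q - 1)) z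
  rw [pow_sub_one_mul hq z] at h
  rw [h, ← C_1, natDegree_X_pow_add_C]
  simp only [map_add, map_pow, aeval_X, map_one]
  calc z ^ (q + 1) * ((z ^ (q - 1)) ^ (q + 1) + 1)
      = (z ^ (q - 1) * z) ^ (q + 1) + z ^ q * z := by ring
    _ = z ^ q * z + (z ^ q * z) ^ q := by rw [pow_sub_one_mul hq z, mul_pow]; ring

theorem RatFunc.X_pow_ne_X {K : Type*} [Field K] {q : ℕ} (hq : 1 < q) :
    (RatFunc.X : RatFunc K) ^ q ≠ RatFunc.X := by
  have h := RatFunc.algebraMap_ne_zero (FiniteField.X_pow_card_sub_X_ne_zero K hq)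
  rw [map_sub, map_pow, RatFunc.algebraMap_X] at h
  exact sub_ne_zero.1 h

theorem pow_mul_add_mul_pow_eq_mul_prod_of_card_eq_sq {K : Type*} [Field K] [Finite K] {q : ℕ}
    (hcard : Nat.card K = q ^ 2) (hq4 : q % 4 = 1) (α : Fin ((q - 1) / 4) → K)
    (hα : (⋃ i, ({α i, -α i, (α i)⁻¹, -(α i)⁻¹} : Set K)) =
      {β : K | β ^ (q + 1) + 1 = 0 ∧ β ^ 2 + 1 ≠ 0})
    (u v : RatFunc K) (hu : u = 1 / (RatFunc.X ^ q - RatFunc.X))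
    (hv : v = RatFunc.X ^ (q + 1) / (RatFunc.X ^ q - RatFunc.X)) :
    u ^ q * v + u * v ^ q =
      (2 * (u * v) + 1) *
        ∏ i : Fin ((q - 1) / 4),
          (1 + 4 * (u * v) - RatFunc.C ((α i + α i ^ q) ^ 2) * (u * v) ^ 2) := by
  cases nonempty_fintype K
  rw [Nat.card_eq_fintype_card] at hcard
  obtain ⟨k, hk⟩ : ∃ k, q = 4 * k + 1 := ⟨(q - 1) / 4, by omega⟩
  have hq1 : 1 < q := by
    have := hcard ▸ Fintype.one_lt_card (α := K)
    nlinarith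
  have hdvd : 2 * (q + 1) ∣ Fintype.card K - 1 :=
    ⟨2 * k, by rw [hcard]; exact Nat.sub_eq_of_eq_add (by rw [hk]; ring)⟩
  have hsplits := FiniteField.splits_X_pow_add_one hdvd
  obtain ⟨i, hi⟩ : IsSquare (-1 : K) :=
    FiniteField.isSquare_neg_one_iff.2 (by rw [hcard, hk]; ring_nf; omega)
  have hi2 : i ^ 2 = -1 := by rw [hi, sq]
  have hroots := roots_X_pow_add_one_eq hi2 (by simp; omega) hsplits
    (FiniteField.nodup_roots_X_pow_add_one hdvd) α hα
  have hprod := prod_roots_X_pow_succ_add_one_map_pow_sub_algebraMap_mul (by omega) hsplits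
    (RatFunc.X : RatFunc K)
  have hyz := RatFunc.X_pow_ne_X (K := K) hq1
  rw [RatFunc.algebraMap_eq_C] at hprod
  rw [pow_succ] at hv
  generalize (RatFunc.X : RatFunc K) ^ q = y at hprod hu hv hyz
  generalize (RatFunc.X : RatFunc K) = z at hprod hu hv hyz
  have huv : u * v = y * z / (y - z) ^ 2 := by
    rw [hu, hv, div_mul_div_comm, one_mul, ← sq]
  rw [huv, hu, hv, one_div_sub_pow_mul_add_mul_pow hyz, ← hprod, hroots,
    prod_map_sub_mul_div_sub_pow_eq RatFunc.C (by simp; omega) hi2 α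
      (fun j => (hα.subset (Set.mem_iUnion.2 ⟨j, by simp⟩)).1) hyz]

theorem stmt18_general (p n q : ℕ) [Fact p.Prime] (hn : 0 < n) (hq : q = p ^ n)
    (hq4 : q % 4 = 1)
    (α : Fin ((q - 1) / 4) → GaloisField p (2 * n))
    (hα : (⋃ i, ({α i, -α i, (α i)⁻¹, -(α i)⁻¹} : Set (GaloisField p (2 * n)))) =
      {β : GaloisField p (2 * n) | β ^ (q + 1) + 1 = 0 ∧ β ^ 2 + 1 ≠ 0})
    (u v : RatFunc (GaloisField p (2 * n)))
    (hu : u = 1 / (RatFunc.X ^ q - RatFunc.X))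
    (hv : v = RatFunc.X ^ (q + 1) / (RatFunc.X ^ q - RatFunc.X)) :
    u ^ q * v + u * v ^ q =
      (2 * (u * v) + 1) *
        ∏ i : Fin ((q - 1) / 4),
          (1 + 4 * (u * v) - RatFunc.C ((α i + α i ^ q) ^ 2) * (u * v) ^ 2) := by
  refine pow_mul_add_mul_pow_eq_mul_prod_of_card_eq_sq ?_ hq4 α hα u v hu hv
  rw [GaloisField.card p (2 * n) (by omega), hq, ← pow_mul, mul_comm]

theorem stmt18 (p n q : ℕ) [Fact p.Prime] (hp : p ≠ 2) (hn : 0 < n) (hq : q = p ^ n)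
    (hq4 : q % 4 = 1)
    (α : Fin ((q - 1) / 4) → GaloisField p (2 * n))
    (hα : (⋃ i, ({α i, -α i, (α i)⁻¹, -(α i)⁻¹} : Set (GaloisField p (2 * n)))) =
      {β : GaloisField p (2 * n) | β ^ (q + 1) + 1 = 0 ∧ β ^ 2 + 1 ≠ 0})
    (u v : RatFunc (GaloisField p (2 * n)))
    (hu : u = 1 / (RatFunc.X ^ q - RatFunc.X))
    (hv : v = RatFunc.X ^ (q + 1) / (RatFunc.X ^ q - RatFunc.X)) :
    u ^ q * v + u * v ^ q =
      (2 * (u * v) + 1) *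
        ∏ i : Fin ((q - 1) / 4),
          (1 + 4 * (u * v) - RatFunc.C ((α i + α i ^ q) ^ 2) * (u * v) ^ 2) :=
  stmt18_general p n q hn hq hq4 α hα u v hu hv
end
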